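/- LDU decomposition in a domain: let A be an n×m matrix of rank r over a commutative domain R with all leading principal minors α^1,…,α^r nonzero. Then over the fraction field, A = L·D·U, where L = (α^j_{i,j}) (i = 1…n, j = 1…r) is lower triangular with diagonal entries α^1,…,α^r, D = diag(1/(α^{i−1} α^i))_{i=1…r}, and U = (α^i_{i,j}) (i = 1…r, j = 1…m) is upper triangular with diagonal entries α^1,…,α^r. Moreover, all entries of L and U lie in R. -/

import Mathlib

/-!
Over the fraction field, Sylvester's identity for a pivot bordered by two rows and two columns,
`α^{k+2}_{i,j} α^k = α^{k+1} α^{k+1}_{i,j} - α^{k+1}_{k+1,j} α^{k+1}_{i,k+1}`, makes the entries of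
`L D U` telescope: `∑_{l ≤ t} α^l_{i,l} α^l_{l,j} / (α^{l-1} α^l) = a_{ij} - α^{t+1}_{i,j} / α^t`.
For `t = r` the remainder is an `(r+1)`-minor, which vanishes because `A` has rank `r`.
The triangular shape of `L` and `U` comes from minors with a repeated row or column.
-/

open Matrix

/-- `mnr A k i j` is the `k×k` minor of `A` on rows `1,…,k−1,i` and columns
`1,…,k−1,j` (positions are 1-indexed; `i j` are 0-indexed `Fin` values).
For `k = 0` this is the empty determinant `1`. -/
def mnr {R : Type*} [CommRing R] {n m : ℕ} (A : Matrix (Fin n) (Fin m) R) (k : ℕ)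
    (i : Fin n) (j : Fin m) : R :=
  Matrix.det (Matrix.of fun a b : Fin k =>
    A (if h : a.val < k - 1 ∧ a.val < n then ⟨a.val, h.2⟩ else i)
      (if h : b.val < k - 1 ∧ b.val < m then ⟨b.val, h.2⟩ else j))

/-- `lead A k` is the leading principal `k×k` minor `α^k` of `A`, with `α^0 = 1`. -/
def lead {R : Type*} [CommRing R] {n m : ℕ} (A : Matrix (Fin n) (Fin m) R) (k : ℕ) : R :=
  if h : 0 < k ∧ k ≤ n ∧ k ≤ m then
    mnr A k ⟨k - 1, by omega⟩ ⟨k - 1, by omega⟩ else 1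

namespace Matrix

variable {K ι κ : Type*} [Fintype ι] [DecidableEq ι]

theorem det_submatrix_bordered [CommRing K] (N : Matrix (ι ⊕ κ) (ι ⊕ κ) K)
    [Invertible N.toBlocks₁₁] (b c : κ) :
    det (N.submatrix (Sum.map id ![b]) (Sum.map id ![c])) =
      det N.toBlocks₁₁ * (N.toBlocks₂₂ - N.toBlocks₂₁ * ⅟N.toBlocks₁₁ * N.toBlocks₁₂) b c := by
  have hblocks : N.submatrix (Sum.map id ![b]) (Sum.map id ![c]) =
      fromBlocks N.toBlocks₁₁ (N.toBlocks₁₂.submatrix id ![c])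
        (N.toBlocks₂₁.submatrix ![b] id) (N.toBlocks₂₂.submatrix ![b] ![c]) := by
    ext (x | x) (y | y) <;> rfl
  rw [hblocks, det_fromBlocks₁₁, det_unique (_ : Matrix (Fin 1) (Fin 1) K)]
  rfl

/-- Both sides equal `det P ^ 2` times the determinant of the `2 × 2` Schur complement of the
pivot block `P = N.toBlocks₁₁`. -/
theorem det_mul_det_toBlocks₁₁_eq [Field K] (N : Matrix (ι ⊕ Fin 2) (ι ⊕ Fin 2) K)
    (hN : det N.toBlocks₁₁ ≠ 0) :
    det N * det N.toBlocks₁₁ =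
      det (N.submatrix (Sum.map id ![0]) (Sum.map id ![0])) *
          det (N.submatrix (Sum.map id ![1]) (Sum.map id ![1])) -
        det (N.submatrix (Sum.map id ![0]) (Sum.map id ![1])) *
          det (N.submatrix (Sum.map id ![1]) (Sum.map id ![0])) := by
  have := invertibleOfIsUnitDet _ (isUnit_iff_ne_zero.2 hN)
  have hdet : det N = det N.toBlocks₁₁ *
      det (N.toBlocks₂₂ - N.toBlocks₂₁ * ⅟N.toBlocks₁₁ * N.toBlocks₁₂) := by
    conv_lhs => rw [← fromBlocks_toBlocks N]
    exact det_fromBlocks₁₁ _ _ _ _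
  rw [hdet, det_fin_two]
  simp only [det_submatrix_bordered]
  ring

theorem det_submatrix_eq_zero_of_rank_lt [Field K] {m n : Type*} [Fintype n]
    (A : Matrix m n K) (r : ι → m) (c : ι → n) (h : A.rank < Fintype.card ι) :
    det (A.submatrix r c) = 0 := by
  by_contra hdet
  have hrank := rank_of_isUnit _ ((isUnit_iff_isUnit_det _).2 (isUnit_iff_ne_zero.2 hdet))
  have := rank_submatrix_le A r c
  omega

end Matrix

section

variable {R : Type*} [CommRing R] {n m : ℕ}

theorem mnr_one (A : Matrix (Fin n) (Fin m) R) (i : Fin n) (j : Fin m) :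
    mnr A 1 i j = A i j := by
  simp [mnr]

theorem lead_zero (A : Matrix (Fin n) (Fin m) R) : lead A 0 = 1 := dif_neg (by omega)

theorem lead_succ (A : Matrix (Fin n) (Fin m) R) {k : ℕ} (hn : k < n) (hm : k < m) :
    lead A (k + 1) = mnr A (k + 1) ⟨k, hn⟩ ⟨k, hm⟩ :=
  dif_pos ⟨k.succ_pos, hn, hm⟩

theorem mnr_map {S : Type*} [CommRing S] (f : R →+* S) (A : Matrix (Fin n) (Fin m) R) (k : ℕ)
    (i : Fin n) (j : Fin m) : mnr (A.map f) k i j = f (mnr A k i j) := by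
  rw [mnr, mnr, RingHom.map_det]
  rfl

theorem lead_map {S : Type*} [CommRing S] (f : R →+* S) (A : Matrix (Fin n) (Fin m) R) (k : ℕ) :
    lead (A.map f) k = f (lead A k) := by
  unfold lead
  split_ifs
  · exact mnr_map f A k _ _
  · exact f.map_one.symm

theorem mnr_eq_zero_of_row_lt (A : Matrix (Fin n) (Fin m) R) {k : ℕ} {i : Fin n} (j : Fin m)
    (hi : i.val + 1 < k) : mnr A k i j = 0 := by
  apply det_zero_of_row_eq (i := (⟨i, by omega⟩ : Fin k)) (j := ⟨k - 1, by omega⟩)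
  · simp only [ne_eq, Fin.mk.injEq]
    omega
  · funext c
    simp only [of_apply]
    congr 1
    rw [dif_pos ⟨by omega, i.isLt⟩, dif_neg (by omega)]

theorem mnr_eq_zero_of_col_lt (A : Matrix (Fin n) (Fin m) R) {k : ℕ} (i : Fin n) {j : Fin m}
    (hj : j.val + 1 < k) : mnr A k i j = 0 := by
  apply det_zero_of_column_eq (i := (⟨j, by omega⟩ : Fin k)) (j := ⟨k - 1, by omega⟩)
  · simp only [ne_eq, Fin.mk.injEq]
    omega
  · intro c
    simp only [of_apply]
    congr 1
    rw [dif_pos ⟨by omega, j.isLt⟩, dif_neg (by omega)]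

theorem dite_lt_succ_comp_finSumFinEquiv {k : ℕ} (hn : k ≤ n) (i : Fin n) :
    (fun a : Fin (k + 1) => if h : a.val < k + 1 - 1 ∧ a.val < n then (⟨a, h.2⟩ : Fin n) else i) ∘
      finSumFinEquiv = Sum.elim (Fin.castLE hn) ![i] := by
  ext (a | a) : 1
  · simp [Fin.castLE, a.isLt, show a.val < n by omega]
  · fin_cases a; simp

theorem dite_lt_add_two_comp_finSumFinEquiv {k : ℕ} (hn : k < n) (i : Fin n) :
    (fun a : Fin (k + 2) => if h : a.val < k + 2 - 1 ∧ a.val < n then (⟨a, h.2⟩ : Fin n) else i) ∘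
      finSumFinEquiv = Sum.elim (Fin.castLE hn.le) ![⟨k, hn⟩, i] := by
  ext (a | a) : 1
  · simp [Fin.castLE, show a.val < n by omega]
  · fin_cases a <;> simp [hn]

theorem mnr_succ_eq_det_submatrix (A : Matrix (Fin n) (Fin m) R) {k : ℕ} (hn : k ≤ n)
    (hm : k ≤ m) (i : Fin n) (j : Fin m) :
    mnr A (k + 1) i j =
      det (A.submatrix (Sum.elim (Fin.castLE hn) ![i]) (Sum.elim (Fin.castLE hm) ![j])) := by
  rw [← dite_lt_succ_comp_finSumFinEquiv, ← dite_lt_succ_comp_finSumFinEquiv,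
    ← submatrix_submatrix, det_submatrix_equiv_self]
  rfl

theorem mnr_add_two_eq_det_submatrix (A : Matrix (Fin n) (Fin m) R) {k : ℕ} (hn : k < n)
    (hm : k < m) (i : Fin n) (j : Fin m) :
    mnr A (k + 2) i j =
      det (A.submatrix (Sum.elim (Fin.castLE hn.le) ![⟨k, hn⟩, i])
        (Sum.elim (Fin.castLE hm.le) ![⟨k, hm⟩, j])) := by
  rw [← dite_lt_add_two_comp_finSumFinEquiv, ← dite_lt_add_two_comp_finSumFinEquiv,
    ← submatrix_submatrix, det_submatrix_equiv_self]
  rfl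

theorem lead_eq_det_submatrix (A : Matrix (Fin n) (Fin m) R) {k : ℕ} (hn : k ≤ n)
    (hm : k ≤ m) : lead A k = det (A.submatrix (Fin.castLE hn) (Fin.castLE hm)) := by
  rcases k with _ | k
  · rw [lead_zero, det_isEmpty]
  · rw [lead_succ A hn hm, mnr]
    congr 1
    ext a b
    simp only [of_apply, submatrix_apply]
    congr 1 <;> split_ifs <;> ext <;> simp <;> omega

end

section

variable {K : Type*} [Field K] {n m : ℕ}

theorem mnr_eq_zero_of_rank_lt (B : Matrix (Fin n) (Fin m) K) {k : ℕ}
    (h : B.rank < k) (i : Fin n) (j : Fin m) : mnr B k i j = 0 :=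
  det_submatrix_eq_zero_of_rank_lt B _ _ (by rwa [Fintype.card_fin])

theorem mnr_add_two_mul_lead (B : Matrix (Fin n) (Fin m) K) {k : ℕ} (hn : k < n) (hm : k < m)
    (hk : lead B k ≠ 0) (i : Fin n) (j : Fin m) :
    mnr B (k + 2) i j * lead B k =
      lead B (k + 1) * mnr B (k + 1) i j - mnr B (k + 1) ⟨k, hn⟩ j * mnr B (k + 1) i ⟨k, hm⟩ := by
  set N := B.submatrix (Sum.elim (Fin.castLE hn.le) ![⟨k, hn⟩, i])
    (Sum.elim (Fin.castLE hm.le) ![⟨k, hm⟩, j])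
  have hpivot : det N.toBlocks₁₁ = lead B k := (lead_eq_det_submatrix B hn.le hm.le).symm
  have hbordered : ∀ b c : Fin 2, det (N.submatrix (Sum.map id ![b]) (Sum.map id ![c])) =
      mnr B (k + 1) (![⟨k, hn⟩, i] b) (![⟨k, hm⟩, j] c) := by
    intro b c
    rw [mnr_succ_eq_det_submatrix B hn.le hm.le, submatrix_submatrix]
    congr 2 <;> ext (a | a) : 1 <;> simp
  have := det_mul_det_toBlocks₁₁_eq N (hpivot ▸ hk)
  rw [hpivot, ← mnr_add_two_eq_det_submatrix] at this
  simp only [hbordered] at this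
  rw [this, lead_succ B hn hm]
  simp only [cons_val_zero, cons_val_one]

theorem sum_mnr_mul_mnr_eq_sub (B : Matrix (Fin n) (Fin m) K) {t : ℕ} (htn : t ≤ n)
    (htm : t ≤ m) (hlead : ∀ l ≤ t, lead B l ≠ 0) (i : Fin n) (j : Fin m) :
    ∑ l : Fin t, mnr B (l + 1) i ⟨l, by omega⟩ * (1 / (lead B l * lead B (l + 1))) *
        mnr B (l + 1) ⟨l, by omega⟩ j =
      B i j - mnr B (t + 1) i j / lead B t := by
  induction t with
  | zero => simp [mnr_one, lead_zero]
  | succ t ih =>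
    simp only [Fin.sum_univ_castSucc, Fin.val_castSucc, Fin.val_last]
    rw [ih (by omega) (by omega) fun l hl => hlead l (by omega)]
    have hdj := mnr_add_two_mul_lead B htn htm (hlead t (by omega)) i j
    have h₀ := hlead t (by omega)
    have h₁ := hlead (t + 1) le_rfl
    field_simp
    linear_combination hdj

theorem eq_ldu_of_rank_le (B : Matrix (Fin n) (Fin m) K) {r : ℕ} (hrn : r ≤ n) (hrm : r ≤ m)
    (hrank : B.rank ≤ r) (hα : ∀ l, 1 ≤ l → l ≤ r → lead B l ≠ 0) :
    B = (of fun a (b : Fin r) => mnr B (b + 1) a ⟨b, by omega⟩) *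
      diagonal (fun a : Fin r => 1 / (lead B a * lead B (a + 1))) *
      of fun (a : Fin r) b => mnr B (a + 1) ⟨a, by omega⟩ b := by
  have hlead : ∀ l ≤ r, lead B l ≠ 0 := fun l hl =>
    l.eq_zero_or_pos.elim (fun h => h ▸ (lead_zero B).symm ▸ one_ne_zero) (hα l · hl)
  ext i j
  rw [mul_apply]
  simp only [mul_diagonal, of_apply]
  rw [sum_mnr_mul_mnr_eq_sub B hrn hrm hlead, mnr_eq_zero_of_rank_lt B (by omega), zero_div,
    sub_zero]

end

/-- LDU decomposition in a domain: `A = L·D·U` over the fraction field, with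
`L = (α^j_{i,j})` lower triangular with diagonal `α^1,…,α^r`,
`D = diag(1/(α^{i−1}α^i))`, `U = (α^i_{i,j})` upper triangular with diagonal
`α^1,…,α^r`; all entries of `L` and `U` lie in (the image of) `R`. -/
theorem ldu_decomposition_in_domain {R : Type*} [CommRing R] [IsDomain R] {n m : ℕ}
    (A : Matrix (Fin n) (Fin m) R) (r : ℕ) (hrn : r ≤ n) (hrm : r ≤ m)
    (hrank : (A.map (algebraMap R (FractionRing R))).rank = r)
    (hα : ∀ i, 1 ≤ i → i ≤ r → lead A i ≠ 0) :
    ∃ (L : Matrix (Fin n) (Fin r) (FractionRing R))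
      (D : Matrix (Fin r) (Fin r) (FractionRing R))
      (U : Matrix (Fin r) (Fin m) (FractionRing R)),
      (L = Matrix.of fun a b =>
          algebraMap R (FractionRing R) (mnr A (b.val + 1) a ⟨b.val, by omega⟩)) ∧
      (D = Matrix.diagonal fun a =>
          1 / (algebraMap R (FractionRing R) (lead A a.val) *
            algebraMap R (FractionRing R) (lead A (a.val + 1)))) ∧
      (U = Matrix.of fun a b =>
          algebraMap R (FractionRing R) (mnr A (a.val + 1) ⟨a.val, by omega⟩ b)) ∧
      A.map (algebraMap R (FractionRing R)) = L * D * U ∧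
      (∀ (a : Fin n) (b : Fin r), a.val < b.val → L a b = 0) ∧
      (∀ a : Fin r, L ⟨a.val, by omega⟩ a = algebraMap R (FractionRing R) (lead A (a.val + 1))) ∧
      (∀ (a : Fin r) (b : Fin m), b.val < a.val → U a b = 0) ∧
      (∀ a : Fin r, U a ⟨a.val, by omega⟩ = algebraMap R (FractionRing R) (lead A (a.val + 1))) ∧
      (∀ (a : Fin n) (b : Fin r), ∃ x : R, L a b = algebraMap R (FractionRing R) x) ∧
      (∀ (a : Fin r) (b : Fin m), ∃ x : R, U a b = algebraMap R (FractionRing R) x) := by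
  set φ := algebraMap R (FractionRing R)
  refine ⟨_, _, _, rfl, rfl, rfl, ?_, ?_, ?_, ?_, ?_, fun _ _ => ⟨_, rfl⟩, fun _ _ => ⟨_, rfl⟩⟩
  · have hαφ : ∀ l, 1 ≤ l → l ≤ r → lead (A.map φ) l ≠ 0 := fun l h₁ h₂ => by
      rw [lead_map]
      exact (map_ne_zero_iff φ (IsFractionRing.injective R _)).2 (hα l h₁ h₂)
    simpa only [mnr_map, lead_map] using eq_ldu_of_rank_le (A.map φ) hrn hrm hrank.le hαφ
  · intro a b hab
    rw [of_apply, mnr_eq_zero_of_row_lt A _ (by omega), map_zero]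
  · intro a
    rw [of_apply, lead_succ A (by omega) (by omega)]
  · intro a b hba
    rw [of_apply, mnr_eq_zero_of_col_lt A _ (by omega), map_zero]
  · intro a
    rw [of_apply, lead_succ A (by omega) (by omega)]
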